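/- Let E be a finite-dimensional complex vector space and let A : E → E be a linear map whose spectrum is contained in Σ₁. Then the linear map ψ(A) := Σ_{k=1}^∞ ((2πi)^k / k!) · A^{k−1} is invertible. -/

import Mathlib

open Complex

noncomputable section

/-- The set Σ: complex numbers `α` with `-1 ≤ Re α ≤ 0`, `Im α ≥ 0` if `Re α = -1`,
and `Im α < 0` if `Re α = 0`. -/
def SigmaSet : Set ℂ :=
  {α : ℂ | -1 ≤ α.re ∧ α.re ≤ 0 ∧ (α.re = -1 → 0 ≤ α.im) ∧ (α.re = 0 → α.im < 0)}

/-- The set Σ₁ := Σ + 1. -/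
def Sigma1 : Set ℂ := {α : ℂ | α - 1 ∈ SigmaSet}

/-- The constant `2πi`. -/
def twoPiI : ℂ := 2 * Real.pi * Complex.I

/-- The exponential `exp(2πi·f)` of an endomorphism `f`. -/
def expEnd {E : Type*} [NormedAddCommGroup E] [NormedSpace ℂ E] (f : E →L[ℂ] E) :
    E →L[ℂ] E :=
  NormedSpace.exp (twoPiI • f)

/-- The power series `ψ(A) := ∑_{k=1}^∞ ((2πi)^k / k!) A^(k-1)`. It satisfies
`A·ψ(A) = ψ(A)·A = exp(2πi·A) − Id`. -/
def psiEnd {E : Type*} [NormedAddCommGroup E] [NormedSpace ℂ E] (A : E →L[ℂ] E) :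
    E →L[ℂ] E :=
  ∑' k : ℕ, ((twoPiI ^ (k + 1) / (Nat.factorial (k + 1) : ℂ)) • A ^ k)

/-! `ψ(A)` commutes with `A`, so if it were singular its kernel would be a nonzero `A`-invariant
subspace and would contain an eigenvector `v` of `A`, with eigenvalue `μ ∈ Σ₁`. On `v` the
series `ψ(A)` acts as the scalar `ψ(μ)`, and `μ ψ(μ) = exp(2πiμ) - 1` with `ψ(0) = 2πi`, so
`ψ(μ)` vanishes exactly at the nonzero integers, none of which lies in `Σ₁`. -/

def psiCoeff (k : ℕ) : ℂ := twoPiI ^ (k + 1) / ((k + 1).factorial : ℂ)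

def psiC (μ : ℂ) : ℂ := ∑' k : ℕ, psiCoeff k * μ ^ k

lemma norm_twoPiI : ‖twoPiI‖ = 2 * Real.pi := by
  simp [twoPiI, abs_of_pos Real.pi_pos]

lemma twoPiI_ne_zero : twoPiI ≠ 0 := by
  simp [twoPiI, Real.pi_ne_zero]

lemma norm_psiCoeff_le (k : ℕ) :
    ‖psiCoeff k‖ ≤ 2 * Real.pi * ((k.factorial : ℝ)⁻¹ * (2 * Real.pi) ^ k) := by
  have hfac : (k.factorial : ℝ) ≤ (k + 1).factorial := by
    exact_mod_cast Nat.factorial_le k.le_succ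
  calc ‖psiCoeff k‖ = (2 * Real.pi) ^ (k + 1) / (k + 1).factorial := by
        simp [psiCoeff, norm_twoPiI]
    _ ≤ (2 * Real.pi) ^ (k + 1) / k.factorial := by gcongr
    _ = _ := by ring

lemma norm_psiCoeff_smul_pow_le {𝔸 : Type*} [NormedRing 𝔸] [NormedAlgebra ℂ 𝔸] (a : 𝔸) (k : ℕ) :
    ‖psiCoeff k • a ^ k‖ ≤ 2 * Real.pi * ‖((k.factorial : ℂ)⁻¹) • (twoPiI • a) ^ k‖ :=
  calc ‖psiCoeff k • a ^ k‖ = ‖psiCoeff k‖ * ‖a ^ k‖ := norm_smul _ _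
    _ ≤ 2 * Real.pi * ((k.factorial : ℝ)⁻¹ * (2 * Real.pi) ^ k) * ‖a ^ k‖ := by
        gcongr; exact norm_psiCoeff_le k
    _ = _ := by
        rw [smul_pow, smul_smul, norm_smul, norm_mul, norm_pow twoPiI, norm_twoPiI]
        simp only [norm_inv, Complex.norm_natCast]
        ring

lemma summable_psiCoeff_smul_pow {𝔸 : Type*} [NormedRing 𝔸] [NormedAlgebra ℂ 𝔸]
    [CompleteSpace 𝔸] (a : 𝔸) : Summable fun k ↦ psiCoeff k • a ^ k :=
  .of_norm_bounded ((NormedSpace.norm_expSeries_summable' (twoPiI • a)).mul_left (2 * Real.pi))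
    (norm_psiCoeff_smul_pow_le a)

lemma psiC_zero : psiC 0 = twoPiI := by
  rw [psiC, tsum_eq_single 0 fun k hk ↦ by simp [hk]]
  simp [psiCoeff]

lemma mul_psiC (μ : ℂ) : μ * psiC μ = Complex.exp (twoPiI * μ) - 1 := by
  simp only [Complex.exp_eq_exp_ℂ, NormedSpace.exp_eq_tsum_div]
  rw [(NormedSpace.expSeries_div_summable (twoPiI * μ)).tsum_eq_zero_add, psiC, ← tsum_mul_left]
  simp only [pow_zero, Nat.factorial_zero, Nat.cast_one, div_one, add_sub_cancel_left]
  exact tsum_congr fun k ↦ by rw [psiCoeff, mul_pow]; ring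

lemma psiC_eq_zero_iff {μ : ℂ} : psiC μ = 0 ↔ ∃ n : ℤ, n ≠ 0 ∧ μ = n := by
  rcases eq_or_ne μ 0 with rfl | hμ
  · simp [psiC_zero, twoPiI_ne_zero, eq_comm]
  have hint : ∀ n : ℤ, twoPiI * μ = n * (2 * Real.pi * Complex.I) ↔ μ = n := fun n ↦ by
    rw [mul_comm (n : ℂ)]
    exact mul_right_inj' twoPiI_ne_zero
  rw [← mul_right_inj' hμ, mul_zero, mul_psiC, sub_eq_zero, Complex.exp_eq_one_iff]
  simp_rw [hint]
  constructor
  · rintro ⟨n, rfl⟩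
    exact ⟨n, by rintro rfl; simp at hμ, rfl⟩
  · rintro ⟨n, -, h⟩
    exact ⟨n, h⟩

lemma intCast_mem_Sigma1_iff (n : ℤ) : (n : ℂ) ∈ Sigma1 ↔ n = 0 := by
  constructor
  · rintro ⟨hlo, hhi, -, hre⟩
    simp only [Complex.sub_re, Complex.intCast_re, Complex.one_re, Complex.sub_im,
      Complex.intCast_im, Complex.one_im] at hlo hhi hre
    have h0 : 0 ≤ n := by exact_mod_cast (by linarith : (0 : ℝ) ≤ n)
    have h1 : n ≤ 1 := by exact_mod_cast (by linarith : (n : ℝ) ≤ 1)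
    interval_cases n
    · rfl
    · norm_num at hre
  · rintro rfl
    norm_num [Sigma1, SigmaSet]

lemma psiC_ne_zero_of_mem_Sigma1 {μ : ℂ} (hμ : μ ∈ Sigma1) : psiC μ ≠ 0 := by
  rintro hψ
  obtain ⟨n, hn, rfl⟩ := psiC_eq_zero_iff.mp hψ
  exact hn ((intCast_mem_Sigma1_iff n).mp hμ)

theorem Module.End.exists_hasEigenvector_mem_ker_of_commute {K V : Type*} [Field K]
    [IsAlgClosed K] [AddCommGroup V] [Module K V] [FiniteDimensional K V] {f g : End K V}
    (hfg : Commute f g) (hg : ¬IsUnit g) : ∃ μ v, v ∈ LinearMap.ker g ∧ f.HasEigenvector μ v := by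
  have : Nontrivial (LinearMap.ker g) := by
    rwa [Submodule.nontrivial_iff_ne_bot, Ne, ← LinearMap.isUnit_iff_ker_eq_bot]
  have hmaps : ∀ x ∈ LinearMap.ker g, f x ∈ LinearMap.ker g := fun x hx ↦ by
    rw [LinearMap.mem_ker] at hx ⊢
    rw [← mul_apply, ← hfg.eq, mul_apply, hx, map_zero]
  obtain ⟨μ, hμ⟩ := exists_eigenvalue (f.restrict hmaps)
  obtain ⟨w, hw⟩ := hμ.exists_hasEigenvector
  refine ⟨μ, w, w.2, hasEigenvector_iff.mpr ⟨?_, ?_⟩⟩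
  · exact mem_eigenspace_iff.mpr (congrArg Subtype.val hw.apply_eq_smul)
  · exact_mod_cast hw.2

theorem ContinuousLinearMap.tsum_smul_pow_apply_of_apply_eq_smul {𝕜 E : Type*}
    [NontriviallyNormedField 𝕜] [NormedAddCommGroup E] [NormedSpace 𝕜 E] {c : ℕ → 𝕜}
    {A : E →L[𝕜] E} {μ : 𝕜} {v : E} (hA : Summable fun k ↦ c k • A ^ k)
    (hμ : Summable fun k ↦ c k * μ ^ k) (hv : A v = μ • v) :
    (∑' k, c k • A ^ k) v = (∑' k, c k * μ ^ k) • v := by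
  have hpow (k : ℕ) : (A ^ k) v = μ ^ k • v := by
    induction k with
    | zero => simp
    | succ k ih => rw [pow_succ', mul_apply_eq_comp, ih, map_smul, hv, smul_smul, pow_succ]
  have hterm : ∀ k, (c k • A ^ k) v = (c k * μ ^ k) • v := fun k ↦ by
    rw [smul_apply, hpow, smul_smul]
  exact (hA.hasSum.mapL (apply 𝕜 E v)).unique
    (by simpa only [apply_apply, hterm] using hμ.hasSum.smul_const v)

lemma commute_psiEnd {E : Type*} [NormedAddCommGroup E] [NormedSpace ℂ E] (A : E →L[ℂ] E) :
    Commute A (psiEnd A) :=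
  Commute.tsum_right A fun k ↦ ((Commute.refl A).pow_right k).smul_right _

lemma psiEnd_apply_of_apply_eq_smul {E : Type*} [NormedAddCommGroup E] [NormedSpace ℂ E]
    [CompleteSpace E] {A : E →L[ℂ] E} {μ : ℂ} {v : E} (hv : A v = μ • v) :
    psiEnd A v = psiC μ • v :=
  A.tsum_smul_pow_apply_of_apply_eq_smul (summable_psiCoeff_smul_pow A)
    (summable_psiCoeff_smul_pow μ) hv

/-- If the spectrum of `A` is contained in Σ₁, then `ψ(A)` is invertible. -/
theorem isUnit_psiEnd
    {E : Type*} [NormedAddCommGroup E] [NormedSpace ℂ E] [FiniteDimensional ℂ E]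
    (A : E →L[ℂ] E) (hA : spectrum ℂ A ⊆ Sigma1) :
    IsUnit (psiEnd A) := by
  by_contra h
  rw [ContinuousLinearMap.isUnit_iff_isUnit_toLinearMap] at h
  obtain ⟨μ, v, hψv, hv⟩ := Module.End.exists_hasEigenvector_mem_ker_of_commute
    ((commute_psiEnd A).map ContinuousLinearMap.toLinearMapRingHom) h
  have hμ : μ ∈ Sigma1 := hA <| by
    rw [ContinuousLinearMap.spectrum_eq]
    exact (Module.End.hasEigenvalue_of_hasEigenvector hv).mem_spectrum
  have hψμ : psiC μ • v = 0 :=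
    (psiEnd_apply_of_apply_eq_smul (Module.End.HasEigenvector.apply_eq_smul hv)).symm.trans hψv
  exact psiC_ne_zero_of_mem_Sigma1 hμ ((smul_eq_zero.mp hψμ).resolve_right hv.2)
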